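/- arXiv:1905.13507 — 2 statements merged into one kernel-verified Lean document; each statement's English description precedes it below -/
import Mathlib

section
/- Let X be a countable Polish metric space. Then the set of finite subsets of X is comeager in the hyperspace K(X): a typical compact subset of X is finite. -/
/-!
A compact set that meets no non-isolated point of `X` is discrete, hence finite. For each
non-isolated `x`, avoiding `x` is an open condition in the Vietoris (= Hausdorff metric)
topology, and a dense one, since finite sets avoiding `x` approximate every compact subset
of `closure {x}ᶜ = X`. A countable space has only countably many such `x`.
-/

open Set Filter TopologicalSpace

section

variable {X : Type*} [TopologicalSpace X]

theorem IsCompact.finite_of_forall_isOpen_singleton {K : Set X} (hK : IsCompact K)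
    (h : ∀ x ∈ K, IsOpen ({x} : Set X)) : K.Finite :=
  hK.finite <| isDiscrete_iff_forall_mem_exists_isOpen.2 fun x hx =>
    ⟨{x}, h x hx, singleton_inter_of_mem hx⟩

namespace TopologicalSpace.NonemptyCompacts

theorem isOpen_setOf_notMem [T1Space X] (x : X) :
    IsOpen {K : NonemptyCompacts X | x ∉ K} := by
  simpa only [subset_compl_singleton_iff, SetLike.mem_coe] using
    isOpen_subsets_of_isOpen (α := X) (isOpen_compl_singleton (x := x))

theorem dense_setOf_notMem {x : X} (hx : ¬IsOpen ({x} : Set X)) :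
    Dense {K : NonemptyCompacts X | x ∉ K} := by
  have hfin : Dense {K : NonemptyCompacts X | (K : Set X).Finite ∧ (K : Set X) ⊆ {x}ᶜ} := by
    rw [Dense, closure_finite_subsets, (dense_compl_singleton_iff_not_open.2 hx).closure_eq]
    exact fun K => subset_univ _
  exact hfin.mono fun K hK => subset_compl_singleton_iff.1 hK.2

theorem setOf_finite_mem_residual [T1Space X] [Countable X] :
    {K : NonemptyCompacts X | (K : Set X).Finite} ∈ residual (NonemptyCompacts X) := by
  have hres : (⋂ x ∈ {x : X | ¬IsOpen {x}}, {K : NonemptyCompacts X | x ∉ K}) ∈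
      residual (NonemptyCompacts X) :=
    (countable_bInter_mem (to_countable _)).2 fun x hx =>
      residual_of_dense_open (isOpen_setOf_notMem x) (dense_setOf_notMem hx)
  refine mem_of_superset hres fun K hK => K.isCompact.finite_of_forall_isOpen_singleton ?_
  simp only [mem_iInter] at hK
  exact fun x hxK => not_not.1 fun hx => hK x hx hxK

end TopologicalSpace.NonemptyCompacts

end

theorem typical_compact_finite_in_countable_polish_general (X : Type*) [MetricSpace X]
    [Countable X] :
    {F : TopologicalSpace.NonemptyCompacts X | (F : Set X).Finite} ∈
      residual (TopologicalSpace.NonemptyCompacts X) :=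
  NonemptyCompacts.setOf_finite_mem_residual

/-- In a countable Polish metric space, the typical compact set is finite: the
finite sets form a comeager (residual) subset of the hyperspace `K(X)` with the
Hausdorff metric. -/
theorem typical_compact_finite_in_countable_polish (X : Type*) [MetricSpace X]
    [CompleteSpace X] [Countable X] :
    {F : TopologicalSpace.NonemptyCompacts X | (F : Set X).Finite} ∈
      residual (TopologicalSpace.NonemptyCompacts X) :=
  typical_compact_finite_in_countable_polish_general X
end

section
/- Let X be a metric space, K ⊆ X compact, and let A, B be disjoint compact sets with K = A ∪ B and δ := dist(A,B) > 0. Then for every r < δ/2 and every F ∈ K(X) with Hausdorff distance H(F, K) < r, the sets C := F ∩ B(A,r) and D := F ∩ B(B,r) are disjoint, nonempty, compact, F = C ∪ D, H(A,C) < r, and H(B,D) < r. -/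
/-!
Since `r < δ/2`, the open `r`-thickenings of `A` and `B` are disjoint, and `H(F, A ∪ B) < r`
puts `F` inside their union; so `C` and `D` are complementary relatively clopen pieces of `F`,
hence compact. Fix `r'` with `H(F, A ∪ B) < r' < r`. A point of `C` is `r'`-close to some point
of `A ∪ B`, which cannot lie in `B` since the point would then be in both thickenings; together
with the points of `F` that are `r'`-close to those of `A`, this gives `H(A, C) ≤ r' < r`.
-/

/-- Distance between two subsets of a metric space:
`dist(A,B) = inf { d(a,b) : a ∈ A, b ∈ B }`. -/
noncomputable def SetDist {X : Type*} [MetricSpace X] (A B : Set X) : ℝ :=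
  sInf (Set.image2 dist A B)

open Set Metric

theorem IsCompact.inter_of_subset_union_of_disjoint {X : Type*} [TopologicalSpace X]
    {F U V : Set X} (hF : IsCompact F) (hV : IsOpen V) (hUV : Disjoint U V)
    (hFUV : F ⊆ U ∪ V) : IsCompact (F ∩ U) := by
  have hFU : F ∩ U = F \ V := by
    ext x
    constructor
    · exact fun ⟨hxF, hxU⟩ ↦ ⟨hxF, hUV.notMem_of_mem_left hxU⟩
    · exact fun ⟨hxF, hxV⟩ ↦ ⟨hxF, (hFUV hxF).resolve_right hxV⟩
  rw [hFU]
  exact hF.diff hV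

section PseudoMetric

variable {X : Type*} [PseudoMetricSpace X] {A B F K : Set X} {r : ℝ}

theorem Metric.subset_thickening_of_hausdorffDist_lt (hfin : hausdorffEDist F K ≠ ⊤)
    (hF : hausdorffDist F K < r) : F ⊆ thickening r K :=
  fun _ hx ↦ mem_thickening_iff.2 (exists_dist_lt_of_hausdorffDist_lt hx hF hfin)

theorem Metric.exists_mem_inter_thickening_dist_lt {a : X} {r' : ℝ} (ha : a ∈ A) (hAK : A ⊆ K)
    (hfin : hausdorffEDist F K ≠ ⊤) (hF : hausdorffDist F K < r') (hr' : r' ≤ r) :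
    ∃ f ∈ F ∩ thickening r A, dist a f < r' := by
  obtain ⟨f, hf, hfa⟩ := exists_dist_lt_of_hausdorffDist_lt' (hAK ha) hF hfin
  rw [dist_comm] at hfa
  exact ⟨f, ⟨hf, mem_thickening_iff.2 ⟨a, ha, by rw [dist_comm]; exact hfa.trans_le hr'⟩⟩, hfa⟩

theorem Metric.hausdorffDist_inter_thickening_lt (hAB : Disjoint (thickening r A) (thickening r B))
    (hAK : A ⊆ K) (hKAB : K ⊆ A ∪ B) (hfin : hausdorffEDist F K ≠ ⊤)
    (hF : hausdorffDist F K < r) : hausdorffDist A (F ∩ thickening r A) < r := by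
  obtain ⟨r', hFr', hr'⟩ := exists_between hF
  refine (hausdorffDist_le_of_mem_dist (hausdorffDist_nonneg.trans hFr'.le)
    (fun a ha ↦ ?_) (fun c hc ↦ ?_)).trans_lt hr'
  · obtain ⟨f, hf, hfa⟩ := exists_mem_inter_thickening_dist_lt ha hAK hfin hFr' hr'.le
    exact ⟨f, hf, hfa.le⟩
  · obtain ⟨k, hk, hck⟩ := exists_dist_lt_of_hausdorffDist_lt hc.1 hFr' hfin
    rcases hKAB hk with hkA | hkB
    · exact ⟨k, hkA, hck.le⟩
    · -- `c` would lie in both thickenings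
      exact absurd (mem_thickening_iff.2 ⟨k, hkB, hck.trans hr'⟩) (hAB.notMem_of_mem_left hc.2)

end PseudoMetric

theorem setDist_le_dist {X : Type*} [MetricSpace X] {A B : Set X} {a b : X} (ha : a ∈ A)
    (hb : b ∈ B) : SetDist A B ≤ dist a b := by
  refine csInf_le ⟨0, ?_⟩ (mem_image2_of_mem ha hb)
  rintro _ ⟨_, -, _, -, rfl⟩
  exact dist_nonneg

theorem Metric.disjoint_thickening_of_add_le_setDist {X : Type*} [MetricSpace X] {A B : Set X}
    {r s : ℝ} (h : r + s ≤ SetDist A B) : Disjoint (thickening r A) (thickening s B) := by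
  refine disjoint_left.2 fun x hxA hxB ↦ ?_
  obtain ⟨a, ha, hxa⟩ := mem_thickening_iff.1 hxA
  obtain ⟨b, hb, hxb⟩ := mem_thickening_iff.1 hxB
  have hab := dist_triangle_left a b x
  linarith [setDist_le_dist ha hb]

theorem hyperspace_splitting_lemma_general (X : Type*) [MetricSpace X]
    (A B K : Set X) (hA : IsCompact A) (hB : IsCompact B)
    (hAne : A.Nonempty) (hBne : B.Nonempty)
    (hK : K = A ∪ B) (δ : ℝ) (hδ : δ = SetDist A B)
    (r : ℝ) (hr : r < δ / 2)
    (F : Set X) (hFc : IsCompact F) (hFne : F.Nonempty)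
    (hH : Metric.hausdorffDist F K < r) :
    Disjoint (F ∩ Metric.thickening r A) (F ∩ Metric.thickening r B) ∧
    (F ∩ Metric.thickening r A).Nonempty ∧ (F ∩ Metric.thickening r B).Nonempty ∧
    IsCompact (F ∩ Metric.thickening r A) ∧ IsCompact (F ∩ Metric.thickening r B) ∧
    F = (F ∩ Metric.thickening r A) ∪ (F ∩ Metric.thickening r B) ∧
    Metric.hausdorffDist A (F ∩ Metric.thickening r A) < r ∧
    Metric.hausdorffDist B (F ∩ Metric.thickening r B) < r := by
  subst hK hδ
  have hAB : Disjoint (thickening r A) (thickening r B) :=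
    disjoint_thickening_of_add_le_setDist (by linarith)
  have hfin : hausdorffEDist F (A ∪ B) ≠ ⊤ := hausdorffEDist_ne_top_of_nonempty_of_bounded hFne
    (hAne.mono subset_union_left) hFc.isBounded (hA.union hB).isBounded
  have hcover : F ⊆ thickening r A ∪ thickening r B :=
    thickening_union r A B ▸ subset_thickening_of_hausdorffDist_lt hfin hH
  obtain ⟨a, ha⟩ := hAne
  obtain ⟨b, hb⟩ := hBne
  obtain ⟨c, hc, -⟩ := exists_mem_inter_thickening_dist_lt ha subset_union_left hfin hH le_rfl
  obtain ⟨d, hd, -⟩ := exists_mem_inter_thickening_dist_lt hb subset_union_right hfin hH le_rfl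
  refine ⟨hAB.mono inter_subset_right inter_subset_right, ⟨c, hc⟩, ⟨d, hd⟩,
    hFc.inter_of_subset_union_of_disjoint isOpen_thickening hAB hcover,
    hFc.inter_of_subset_union_of_disjoint isOpen_thickening hAB.symm (union_comm _ _ ▸ hcover),
    by rw [← inter_union_distrib_left, inter_eq_left.2 hcover],
    hausdorffDist_inter_thickening_lt hAB subset_union_left subset_rfl hfin hH,
    hausdorffDist_inter_thickening_lt hAB.symm subset_union_right (union_comm A B).subset hfin hH⟩

/-- Splitting lemma: if `K = A ∪ B` with `A, B` disjoint nonempty compact sets at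
distance `δ > 0`, then for `0 < r < δ/2` every nonempty compact `F` with
`H(F,K) < r` splits as `F = C ∪ D` with `C := F ∩ B(A,r)`, `D := F ∩ B(B,r)`
disjoint, nonempty, compact, `H(A,C) < r` and `H(B,D) < r`. -/
theorem hyperspace_splitting_lemma (X : Type*) [MetricSpace X]
    (A B K : Set X) (hA : IsCompact A) (hB : IsCompact B)
    (hAne : A.Nonempty) (hBne : B.Nonempty) (hdisj : Disjoint A B)
    (hK : K = A ∪ B) (δ : ℝ) (hδ : δ = SetDist A B) (hδpos : 0 < δ)
    (r : ℝ) (hr0 : 0 < r) (hr : r < δ / 2)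
    (F : Set X) (hFc : IsCompact F) (hFne : F.Nonempty)
    (hH : Metric.hausdorffDist F K < r) :
    Disjoint (F ∩ Metric.thickening r A) (F ∩ Metric.thickening r B) ∧
    (F ∩ Metric.thickening r A).Nonempty ∧ (F ∩ Metric.thickening r B).Nonempty ∧
    IsCompact (F ∩ Metric.thickening r A) ∧ IsCompact (F ∩ Metric.thickening r B) ∧
    F = (F ∩ Metric.thickening r A) ∪ (F ∩ Metric.thickening r B) ∧
    Metric.hausdorffDist A (F ∩ Metric.thickening r A) < r ∧
    Metric.hausdorffDist B (F ∩ Metric.thickening r B) < r :=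
  hyperspace_splitting_lemma_general X A B K hA hB hAne hBne hK δ hδ r hr F hFc hFne hH
end
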